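/- Let A = (1,0,0), B = (0,1,0), C = (0,0,1), D = (1/3,1/3,1/3) in ℝ³. Define x(A) = (1,1,0), x(B) = (0,1,1), x(C) = (1,0,1), x(D) = (0,1,1). Suppose p : {A,B,C,D} → ℝ is any payment rule such that for all t, t' ∈ {A,B,C,D}, ⟨t, x(t)⟩ - p(t) ≥ ⟨t, x(t')⟩ - p(t'). Then p(A) = p(B) = p(C) = p(D). -/

import Mathlib

open Finset

/-- Standard inner product on ℝ^n. -/
def dot {n : ℕ} (x y : Fin n → ℝ) : ℝ := ∑ i, x i * y i

theorem payment_le_of_indifferent {n : ℕ} {x : (Fin n → ℝ) → Fin n → ℝ} {p : (Fin n → ℝ) → ℝ}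
    {t t' : Fin n → ℝ} (hIC : dot t (x t) - p t ≥ dot t (x t') - p t')
    (hval : dot t (x t') = dot t (x t)) : p t ≤ p t' := by
  linarith

theorem dot_vec3 (a b c a' b' c' : ℝ) :
    dot ![a, b, c] ![a', b', c'] = a * a' + b * b' + c * c' := by
  simp [dot, Fin.sum_univ_three]

theorem stmt5_general (x : (Fin 3 → ℝ) → Fin 3 → ℝ) (p : (Fin 3 → ℝ) → ℝ)
    (A B C D : Fin 3 → ℝ)
    (hA : A = ![1, 0, 0]) (hB : B = ![0, 1, 0]) (hC : C = ![0, 0, 1])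
    (hxA : x A = ![1, 1, 0]) (hxB : x B = ![0, 1, 1])
    (hxC : x C = ![1, 0, 1]) (hxD : x D = ![0, 1, 1])
    (hDSIC : ∀ t ∈ ({A, B, C, D} : Set (Fin 3 → ℝ)),
      ∀ t' ∈ ({A, B, C, D} : Set (Fin 3 → ℝ)),
        dot t (x t) - p t ≥ dot t (x t') - p t') :
    p A = p B ∧ p B = p C ∧ p C = p D := by
  have le_of_indifferent : ∀ t ∈ ({A, B, C, D} : Set (Fin 3 → ℝ)),
      ∀ t' ∈ ({A, B, C, D} : Set (Fin 3 → ℝ)), dot t (x t') = dot t (x t) → p t ≤ p t' :=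
    fun t ht t' ht' ↦ payment_le_of_indifferent (hDSIC t ht t' ht')
  -- A, C, B each value the next type's bundle as much as their own: a cycle of payment inequalities.
  have hAC : p A ≤ p C := le_of_indifferent A (by simp) C (by simp)
    (by rw [hxA, hxC, hA, dot_vec3, dot_vec3]; norm_num)
  have hCB : p C ≤ p B := le_of_indifferent C (by simp) B (by simp)
    (by rw [hxB, hxC, hC, dot_vec3, dot_vec3]; norm_num)
  have hBA : p B ≤ p A := le_of_indifferent B (by simp) A (by simp)
    (by rw [hxA, hxB, hB, dot_vec3, dot_vec3]; norm_num)
  -- B and D receive the same bundle, so the two constraints between them are mirror images.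
  have hxBD : x B = x D := hxB.trans hxD.symm
  have hBD : p B ≤ p D := le_of_indifferent B (by simp) D (by simp) (by rw [hxBD])
  have hDB : p D ≤ p B := le_of_indifferent D (by simp) B (by simp) (by rw [hxBD])
  exact ⟨by linarith, by linarith, by linarith⟩

/-- Payment-locking lemma for the opponent-type-A column: any payments making
the given allocation rule DSIC must be equal on all four types. -/
theorem stmt5 (x : (Fin 3 → ℝ) → Fin 3 → ℝ) (p : (Fin 3 → ℝ) → ℝ)
    (A B C D : Fin 3 → ℝ)
    (hA : A = ![1, 0, 0]) (hB : B = ![0, 1, 0]) (hC : C = ![0, 0, 1])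
    (hD : D = ![1/3, 1/3, 1/3])
    (hxA : x A = ![1, 1, 0]) (hxB : x B = ![0, 1, 1])
    (hxC : x C = ![1, 0, 1]) (hxD : x D = ![0, 1, 1])
    (hDSIC : ∀ t ∈ ({A, B, C, D} : Set (Fin 3 → ℝ)),
      ∀ t' ∈ ({A, B, C, D} : Set (Fin 3 → ℝ)),
        dot t (x t) - p t ≥ dot t (x t') - p t') :
    p A = p B ∧ p B = p C ∧ p C = p D :=
  stmt5_general x p A B C D hA hB hC hxA hxB hxC hxD hDSIC
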